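/- Let a : ℤ^d → ℂ be finitely supported with p(z) = Σ_{n∈ℤ^d} a_n z^{−n}, and let V : ℤ^d → ℂ be q-periodic. Set 𝒫̃(z,λ) = det(D^z + B − λI). Then for every m ∈ W, 𝒫̃(μ_m⊙z,λ) = 𝒫̃(z,λ) as Laurent polynomials in z and λ; equivalently, det(D^{μ_m⊙z} + B − λI) = det(D^z + B − λI). -/

import Mathlib

open scoped BigOperators
open Complex

noncomputable section

/-- Laurent polynomials in `z₁,…,z_d` over `ℂ`, encoded as the group algebra of `ℤ^d`. -/
abbrev LMv (d : ℕ) : Type := AddMonoidAlgebra ℂ (Fin d →₀ ℤ)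

/-- Laurent polynomials in `z₁,…,z_d` and `λ` over `ℂ`. -/
abbrev LMvF (d : ℕ) : Type := AddMonoidAlgebra ℂ ((Fin d →₀ ℤ) × ℤ)

/-- `e^{2πin/q}`. -/
def muC (q : ℕ) (n : ℤ) : ℂ := Complex.exp (2 * Real.pi * Complex.I * n / q)

/-- The vector `μ_n = (e^{2πin₁/q₁},…,e^{2πin_d/q_d})`. -/
def muV {d : ℕ} (q : Fin d → ℕ) (n : Fin d → ℤ) : Fin d → ℂ := fun j => muC (q j) (n j)

/-- Substitution `z_j ↦ c_j z_j` in a Laurent polynomial in `z`. -/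
def scaleZ {d : ℕ} (c : Fin d → ℂ) (p : LMv d) : LMv d :=
  AddMonoidAlgebra.ofCoeff (Finsupp.sum (AddMonoidAlgebra.coeff p) fun α a => Finsupp.single α ((∏ j, c j ^ (α j)) * a))

/-- Substitution `z_j ↦ c_j z_j` in a Laurent polynomial in `(z, λ)` (leaving `λ` alone). -/
def scaleZF {d : ℕ} (c : Fin d → ℂ) (P : LMvF d) : LMvF d :=
  AddMonoidAlgebra.ofCoeff (Finsupp.sum (AddMonoidAlgebra.coeff P) fun β a => Finsupp.single β ((∏ j, c j ^ (β.1 j)) * a))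

/-- Total degree `α₁ + ⋯ + α_d` of a monomial exponent. -/
def degS {d : ℕ} (α : Fin d →₀ ℤ) : ℤ := ∑ j, α j

/-- `L₋`, the minimal total degree of a (nonzero) Laurent polynomial. -/
def lowDeg {d : ℕ} (p : LMv d) : ℤ := WithTop.untopD 0 ((Finsupp.support (AddMonoidAlgebra.coeff p)).image degS).min

/-- The lowest degree component of a Laurent polynomial. -/
def lowComp {d : ℕ} (p : LMv d) : LMv d :=
  AddMonoidAlgebra.ofCoeff (Finsupp.filter (fun α => degS α = lowDeg p) (AddMonoidAlgebra.coeff p))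

/-- The fundamental cell `W = {n ∈ ℤ^d : 0 ≤ n_j ≤ q_j - 1}`. -/
def Wcell {d : ℕ} (q : Fin d → ℕ) : Finset (Fin d → ℤ) :=
  Fintype.piFinset fun j => (Finset.range (q j)).image (fun k : ℕ => (k : ℤ))

/-- The canonical embedding of Laurent polynomials in `z` into Laurent polynomials in `(z,λ)`. -/
def embedZ {d : ℕ} (p : LMv d) : LMvF d := AddMonoidAlgebra.ofCoeff (Finsupp.mapDomain (fun α => (α, (0:ℤ))) (AddMonoidAlgebra.coeff p))

/-- The variable `λ`. -/
def lamF (d : ℕ) : LMvF d := AddMonoidAlgebra.ofCoeff (Finsupp.single ((0 : Fin d →₀ ℤ), (1:ℤ)) (1:ℂ))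

/-- Exponent stretching `α ↦ (q₁α₁,…,q_dα_d)`. -/
def stretchE {d : ℕ} (q : Fin d → ℕ) (α : Fin d →₀ ℤ) : Fin d →₀ ℤ :=
  Finsupp.sum α fun j a => Finsupp.single j ((q j : ℤ) * a)

/-- The substitution `𝒫(w,λ) ↦ 𝒫(z₁^{q₁},…,z_d^{q_d},λ)`. -/
def stretchF {d : ℕ} (q : Fin d → ℕ) (P : LMvF d) : LMvF d :=
  AddMonoidAlgebra.ofCoeff (Finsupp.mapDomain (fun β => (stretchE q β.1, β.2)) (AddMonoidAlgebra.coeff P))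

/-- Assumption (A₂): the Laurent polynomials `h(μ_n ⊙ z)`, `n ∈ W`, are pairwise distinct. -/
def PairwiseDistinctH {d : ℕ} (q : Fin d → ℕ) (h : LMv d) : Prop :=
  ∀ n ∈ Wcell q, ∀ n' ∈ Wcell q, n ≠ n' → scaleZ (muV q n) h ≠ scaleZ (muV q n') h

/-- The polynomial `𝒫̃(z,λ) = ∏_{n∈W}(p(μ_n⊙z) − λ) + Σ_{X∈𝒮} C_X ∏_{n∈X}(p(μ_n⊙z) − λ)`. -/
def Ptilde {d : ℕ} (q : Fin d → ℕ) (p : LMv d)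
    (S : Finset (Finset (Fin d → ℤ))) (C : Finset (Fin d → ℤ) → ℂ) : LMvF d :=
  (∏ n ∈ Wcell q, (embedZ (scaleZ (muV q n) p) - lamF d))
    + ∑ X ∈ S, C X • ∏ n ∈ X, (embedZ (scaleZ (muV q n) p) - lamF d)
/-- The symbol `p(z) = Σ_n a_n z^{-n}` of a finite-range Toeplitz operator. -/
def symbA {d : ℕ} (a : (Fin d → ℤ) →₀ ℂ) : LMv d :=
  Finsupp.sum a fun n c => AddMonoidAlgebra.ofCoeff (Finsupp.single (-(Finsupp.equivFunOnFinite.symm n)) c)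

/-- `V` is `q`-periodic. -/
def IsPeriodic {d : ℕ} (q : Fin d → ℕ) (V : (Fin d → ℤ) → ℂ) : Prop :=
  ∀ (n : Fin d → ℤ) (j : Fin d), V (n + (q j : ℤ) • Pi.single j 1) = V n

/-- The discrete Fourier transform `V̂_ℓ = Q^{-1/2} Σ_{m∈W} e^{-2πi⟨m,ℓ⟩} V_m`. -/
def Vhat {d : ℕ} (q : Fin d → ℕ) (V : (Fin d → ℤ) → ℂ) (l : Fin d → ℝ) : ℂ :=
  ((1 / Real.sqrt (∏ j, (q j : ℝ)) : ℝ) : ℂ) *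
    ∑ m ∈ Wcell q, Complex.exp (-(2 * Real.pi * Complex.I) *
      ((∑ j, (m j : ℝ) * l j : ℝ) : ℂ)) * V m

/-- The diagonal matrix `D^z` with entries `p(μ_n ⊙ z)`, as Laurent polynomials. -/
def Dmat {d : ℕ} (q : Fin d → ℕ) (p : LMv d) :
    Matrix {n // n ∈ Wcell q} {n // n ∈ Wcell q} (LMvF d) :=
  Matrix.diagonal fun n => embedZ (scaleZ (muV q n.1) p)

/-- The constant matrix `B` with entries `V̂((n-n')/q)`. -/
def Bmat {d : ℕ} (q : Fin d → ℕ) (V : (Fin d → ℤ) → ℂ) :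
    Matrix {n // n ∈ Wcell q} {n // n ∈ Wcell q} (LMvF d) :=
  fun n n' => AddMonoidAlgebra.ofCoeff (Finsupp.single ((0 : Fin d →₀ ℤ), (0:ℤ))
    (Vhat q V fun j => ((n.1 j - n'.1 j : ℤ) : ℝ) / (q j : ℝ)))

/-- `det(D^z + B - λI)`, a Laurent polynomial in `z` and `λ`. -/
def detLaur {d : ℕ} (q : Fin d → ℕ) (p : LMv d) (V : (Fin d → ℤ) → ℂ) : LMvF d :=
  Matrix.det (Dmat q p + Bmat q V - Matrix.diagonal fun _ => lamF d)
/-- Ordinary polynomials in `z₁,…,z_d` and `λ̃` (the extra `Unit` variable is `λ̃`). -/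
abbrev MvP (d : ℕ) : Type := MvPolynomial (Fin d ⊕ Unit) ℂ

/-- Conversion of a Laurent polynomial in `(z,λ)` with nonnegative exponents into an
ordinary polynomial in `ℂ[z₁,…,z_d,λ̃]` (negative exponents are truncated). -/
def toMvP {d : ℕ} (P : LMvF d) : MvP d :=
  Finsupp.sum (AddMonoidAlgebra.coeff P) fun β c =>
    MvPolynomial.monomial
      (Finsupp.equivFunOnFinite.symm
        (Sum.elim (fun j => (β.1 j).toNat) (fun _ => β.2.toNat))) c

/-- `γ_j(p)`: minus the lowest exponent of `z_j` in `p` if that exponent is negative,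
and `0` otherwise. -/
def gammaV {d : ℕ} (p : LMv d) (j : Fin d) : ℤ :=
  max 0 (-(WithTop.untopD 0 ((Finsupp.support (AddMonoidAlgebra.coeff p)).image fun α => α j).min))

/-- The exponent vector `γ' = (γ₁',…,γ_d')` computed from the lowest degree component of `p`. -/
def gammaE' {d : ℕ} (p : LMv d) : Fin d →₀ ℤ :=
  Finsupp.equivFunOnFinite.symm fun j => gammaV (lowComp p) j

/-- The polynomial `r_n(z,λ̃) = λ̃ z^{γ'} h(μ_n⊙z) − z^{γ'} ∈ ℂ[z,λ̃]`. -/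
def rPoly {d : ℕ} (q : Fin d → ℕ) (p : LMv d) (n : Fin d → ℤ) : MvP d :=
  MvPolynomial.X (Sum.inr ()) *
      toMvP ((AddMonoidAlgebra.single (gammaE' p, (0:ℤ)) (1:ℂ) : LMvF d) * embedZ (scaleZ (muV q n) (lowComp p)))
    - toMvP (AddMonoidAlgebra.ofCoeff (Finsupp.single (gammaE' p, (0:ℤ)) (1:ℂ)))

/-- Substitution `w_j ↦ z_j^{q_j}` (fixing `λ̃`) on ordinary polynomials. -/
def stretchMv {d : ℕ} (q : Fin d → ℕ) : MvP d →ₐ[ℂ] MvP d :=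
  MvPolynomial.aeval
    (Sum.elim (fun j => MvPolynomial.X (Sum.inl j) ^ q j)
      (fun _ => MvPolynomial.X (Sum.inr ())))

/-- Substitution `z_j ↦ c_j z_j` (fixing `λ̃`) on ordinary polynomials. -/
def scaleMv {d : ℕ} (c : Fin d → ℂ) : MvP d →ₐ[ℂ] MvP d :=
  MvPolynomial.aeval
    (Sum.elim (fun j => MvPolynomial.C (c j) * MvPolynomial.X (Sum.inl j))
      (fun _ => MvPolynomial.X (Sum.inr ())))

/-- `ã(z,λ̃) = ∏_{n∈W} r_n(z,λ̃)`. -/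
def atilde {d : ℕ} (q : Fin d → ℕ) (p : LMv d) : MvP d := ∏ n ∈ Wcell q, rPoly q p n

/-- Substitution `λ ↦ λ̃⁻¹` on Laurent polynomials in `(z,λ)`. -/
def invLam {d : ℕ} (P : LMvF d) : LMvF d :=
  AddMonoidAlgebra.ofCoeff (Finsupp.mapDomain (fun β : (Fin d →₀ ℤ) × ℤ => (β.1, -β.2)) (AddMonoidAlgebra.coeff P))

/-- The exponent vector `(γ₁ Q/q₁, …, γ_d Q/q_d)` computed from `p`. -/
def gammaQE {d : ℕ} (q : Fin d → ℕ) (p : LMv d) : Fin d →₀ ℤ :=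
  Finsupp.equivFunOnFinite.symm fun j => gammaV p j * (((∏ i, q i) / q j : ℕ) : ℤ)

/-- `ℛ(w,λ̃) = λ̃^Q w₁^{γ₁Q/q₁}⋯w_d^{γ_dQ/q_d} 𝒫(w,λ̃⁻¹)`. -/
def Rcal {d : ℕ} (q : Fin d → ℕ) (p : LMv d) (P : LMvF d) : LMvF d :=
  (AddMonoidAlgebra.single (gammaQE q p, ((∏ j, q j : ℕ) : ℤ)) (1:ℂ) : LMvF d) * invLam P
/-- Reduction of `v ∈ ℤ^d` modulo the lattice `q₁ℤ ⊕ ⋯ ⊕ q_dℤ` into `W`. -/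
def modW {d : ℕ} (q : Fin d → ℕ) (hq : ∀ j, 1 ≤ q j) (v : Fin d → ℤ) :
    {x // x ∈ Wcell q} :=
  ⟨fun j => v j % (q j : ℤ), by
    simp only [Wcell, Fintype.mem_piFinset, Finset.mem_image, Finset.mem_range]
    intro j
    have h1 : (0:ℤ) < (q j : ℤ) := by exact_mod_cast hq j
    have h2 : v j % (q j : ℤ) < (q j : ℤ) := Int.emod_lt_of_pos _ h1
    have h3 : (0:ℤ) ≤ v j % (q j : ℤ) := Int.emod_nonneg _ (by omega)
    exact ⟨(v j % (q j : ℤ)).toNat, by omega, by omega⟩⟩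

/-- The extension `u^x` of `u : ℂ^W` to `ℤ^d` satisfying `u^x_{n+m⊙q} = e^{2πi⟨m⊙q,x⟩}u_n`. -/
def extFn {d : ℕ} (q : Fin d → ℕ) (hq : ∀ j, 1 ≤ q j) (x : Fin d → ℝ)
    (u : {n // n ∈ Wcell q} → ℂ) (v : Fin d → ℤ) : ℂ :=
  Complex.exp (2 * Real.pi * Complex.I *
      ∑ j, ((((v j / (q j : ℤ)) * (q j : ℤ) : ℤ) : ℂ) * ((x j : ℝ) : ℂ))) *
    u (modW q hq v)

/-- The Floquet restriction `H̃(x)` of `H = A + V` to `ℂ^W`. -/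
def HtildeFn {d : ℕ} (q : Fin d → ℕ) (hq : ∀ j, 1 ≤ q j) (x : Fin d → ℝ)
    (a : (Fin d → ℤ) →₀ ℂ) (V : (Fin d → ℤ) → ℂ)
    (u : {n // n ∈ Wcell q} → ℂ) : {n // n ∈ Wcell q} → ℂ :=
  fun m => (Finsupp.sum a fun k c => c * extFn q hq x u (fun j => m.1 j - k j)) + V m.1 * u m

/-- The matrix of `H̃(x)` in the standard basis of `ℂ^W`. -/
def Hmat {d : ℕ} (q : Fin d → ℕ) (hq : ∀ j, 1 ≤ q j) (x : Fin d → ℝ)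
    (a : (Fin d → ℤ) →₀ ℂ) (V : (Fin d → ℤ) → ℂ) :
    Matrix {n // n ∈ Wcell q} {n // n ∈ Wcell q} ℂ :=
  fun m n => HtildeFn q hq x a V (Pi.single n 1) m

/-- The Floquet–Bloch transform matrix `ℱ^x`. -/
def Fmat {d : ℕ} (q : Fin d → ℕ) (x : Fin d → ℝ) :
    Matrix {n // n ∈ Wcell q} {n // n ∈ Wcell q} ℂ :=
  fun l n => ((1 / Real.sqrt (∏ j, (q j : ℝ)) : ℝ) : ℂ) *
    Complex.exp (-(2 * Real.pi * Complex.I) *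
      ∑ j, ((((l.1 j : ℝ) / (q j : ℝ) + x j : ℝ) : ℂ) * ((n.1 j : ℤ) : ℂ)))

/-- Numerical evaluation of the symbol `p(z) = Σ_n a_n z^{-n}`. -/
def pEvalN {d : ℕ} (a : (Fin d → ℤ) →₀ ℂ) (z : Fin d → ℂ) : ℂ :=
  Finsupp.sum a fun n c => c * ∏ j, z j ^ (-(n j))

/-- The numerical diagonal matrix `D^z`, `z = e^{2πix}`, with entries `p(μ_n ⊙ z)`. -/
def DmatN {d : ℕ} (q : Fin d → ℕ) (x : Fin d → ℝ) (a : (Fin d → ℤ) →₀ ℂ) :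
    Matrix {n // n ∈ Wcell q} {n // n ∈ Wcell q} ℂ :=
  Matrix.diagonal fun n => pEvalN a fun j =>
    muC (q j) (n.1 j) * Complex.exp (2 * Real.pi * Complex.I * ((x j : ℝ) : ℂ))

/-- The numerical matrix `B`. -/
def BmatN {d : ℕ} (q : Fin d → ℕ) (V : (Fin d → ℤ) → ℂ) :
    Matrix {n // n ∈ Wcell q} {n // n ∈ Wcell q} ℂ :=
  fun n n' => Vhat q V fun j => ((n.1 j - n'.1 j : ℤ) : ℝ) / (q j : ℝ)

/-- The symbol of the discrete Laplacian: `p(z) = -(Σ_j z_j + z_j⁻¹)`. -/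
def pLap (d : ℕ) : LMv d :=
  - ∑ j : Fin d, ((AddMonoidAlgebra.single (Finsupp.single j (1:ℤ)) (1:ℂ) : LMv d)
      + (AddMonoidAlgebra.single (Finsupp.single j (-1:ℤ)) (1:ℂ) : LMv d))

/-- The exponent vector `(a, b) ∈ ℤ²`. -/
def ee2 (a b : ℤ) : Fin 2 →₀ ℤ := Finsupp.single 0 a + Finsupp.single 1 b

/-- The monomial `z₁^a z₂^b`. -/
def mono2 (a b : ℤ) : LMv 2 := AddMonoidAlgebra.single (ee2 a b) (1:ℂ)

/-- The symbol of the extended Harper lattice Laplacian. -/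
def pEHM : LMv 2 :=
  -(mono2 1 0 + mono2 (-1) 0 + mono2 0 1 + mono2 0 (-1)
    + mono2 1 (-1) + mono2 (-1) 1 + mono2 1 1 + mono2 (-1) (-1))

/-- The symbol of the (sheared) triangular lattice Laplacian. -/
def pTri : LMv 2 :=
  -(mono2 1 0 + mono2 (-1) 0 + mono2 0 1 + mono2 0 (-1) + mono2 1 (-1) + mono2 (-1) 1)

/-!
The substitution `z ↦ μ_m ⊙ z` is the `ℂ`-algebra automorphism of `ℂ[ℤ^d × ℤ]` that twists each
monomial `z^α λ^k` by the character value `μ_m^α`. Being a ring homomorphism it commutes with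
`det`, and it fixes `λ` and the constant matrix `B`, so it carries `det(D^z + B - λI)` to
`det(D^{μ_m⊙z} + B - λI)`. Since `μ_m ⊙ μ_n = μ_{m+n}` and `μ` is `q`-periodic, `D^{μ_m⊙z}` is `D^z`
with rows and columns permuted by the translation `n ↦ m + n` of `W` modulo `q`. The entry
`V̂((n - n')/q)` of `B` only depends on `n - n'` modulo `q`, because `V̂` is `ℤ^d`-periodic, so `B`
is invariant under that permutation, and a simultaneous permutation of rows and columns does not
change the determinant.
-/

namespace AddMonoidAlgebra

variable {k G H : Type*} [CommSemiring k] [AddMonoid G] [AddMonoid H]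

def twist (χ : Multiplicative G →* k) : k[G] →ₐ[k] k[G] :=
  lift k k[G] G
    { toFun := fun g => single g.toAdd (χ g)
      map_one' := by simp [one_def]
      map_mul' := fun g h => by simp [single_mul_single] }

lemma twist_apply (χ : Multiplicative G →* k) (x : k[G]) :
    twist χ x = ofCoeff (x.coeff.sum fun g b => Finsupp.single g (χ (.ofAdd g) * b)) := by
  rw [twist, lift_apply, ← coeffAddEquiv_symm_apply, map_finsuppSum]
  refine Finsupp.sum_congr fun g _ => ?_
  rw [coeffAddEquiv_symm_apply, ofCoeff_single]
  simp [mul_comm]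

@[simp]
lemma twist_single (χ : Multiplicative G →* k) (g : G) (b : k) :
    twist χ (single g b) = single g (χ (.ofAdd g) * b) := by
  simp [twist, mul_comm]

lemma twist_twist (χ ψ : Multiplicative G →* k) (x : k[G]) :
    twist χ (twist ψ x) = twist (χ * ψ) x := by
  induction x using induction_linear with
  | zero => simp
  | add x y hx hy => simp [hx, hy]
  | single g b => simp [mul_assoc]

lemma twist_mapDomain (χ : Multiplicative H →* k) (f : G →+ H) (x : k[G]) :
    twist χ (mapDomain f x) = mapDomain f (twist (χ.comp f.toMultiplicative) x) := by
  induction x using induction_linear with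
  | zero => simp
  | add x y hx hy => simp [mapDomain_add, hx, hy]
  | single g b => simp [mapDomain_single]

end AddMonoidAlgebra

section Character

variable {ι K : Type*} [Fintype ι] [Field K]

def zpowChar (c : ι → K) (hc : ∀ i, c i ≠ 0) : Multiplicative (ι →₀ ℤ) →* K where
  toFun α := ∏ i, c i ^ α.toAdd i
  map_one' := by simp
  map_mul' α β := by simp [zpow_add₀ (hc _), Finset.prod_mul_distrib]

lemma zpowChar_mul (c c' : ι → K) (hc : ∀ i, c i ≠ 0) (hc' : ∀ i, c' i ≠ 0) :
    zpowChar c hc * zpowChar c' hc' = zpowChar (c * c') fun i => mul_ne_zero (hc i) (hc' i) := by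
  ext α
  simp [zpowChar, mul_zpow, Finset.prod_mul_distrib]

end Character

section Substitution

variable {d : ℕ}

lemma scaleZ_eq_twist (c : Fin d → ℂ) (hc : ∀ j, c j ≠ 0) :
    scaleZ c = AddMonoidAlgebra.twist (zpowChar c hc) :=
  funext fun p => by rw [AddMonoidAlgebra.twist_apply]; rfl

lemma scaleZF_eq_twist (c : Fin d → ℂ) (hc : ∀ j, c j ≠ 0) :
    scaleZF c =
      AddMonoidAlgebra.twist ((zpowChar c hc).comp (AddMonoidHom.fst _ ℤ).toMultiplicative) :=
  funext fun p => by rw [AddMonoidAlgebra.twist_apply]; rfl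

lemma scaleZ_scaleZ (c : Fin d → ℂ) (hc : ∀ j, c j ≠ 0) (c' : Fin d → ℂ) (hc' : ∀ j, c' j ≠ 0)
    (p : LMv d) : scaleZ c (scaleZ c' p) = scaleZ (c * c') p := by
  rw [scaleZ_eq_twist c hc, scaleZ_eq_twist c' hc', AddMonoidAlgebra.twist_twist, zpowChar_mul,
    ← scaleZ_eq_twist]

lemma scaleZF_embedZ (c : Fin d → ℂ) (hc : ∀ j, c j ≠ 0) (p : LMv d) :
    scaleZF c (embedZ p) = embedZ (scaleZ c p) := by
  have h_embed (x : LMv d) : embedZ x = AddMonoidAlgebra.mapDomain (AddMonoidHom.inl _ ℤ) x := rfl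
  have h_char : ((zpowChar c hc).comp (AddMonoidHom.fst _ ℤ).toMultiplicative).comp
      (AddMonoidHom.inl _ ℤ).toMultiplicative = zpowChar c hc := MonoidHom.ext fun _ => rfl
  rw [scaleZF_eq_twist c hc, scaleZ_eq_twist c hc, h_embed, h_embed,
    AddMonoidAlgebra.twist_mapDomain, h_char]

lemma scaleZF_single_zero_left (c : Fin d → ℂ) (hc : ∀ j, c j ≠ 0) (k : ℤ) (b : ℂ) :
    scaleZF c (AddMonoidAlgebra.single (0, k) b) = AddMonoidAlgebra.single (0, k) b := by
  simp [scaleZF_eq_twist c hc, zpowChar]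

lemma scaleZF_det {ι : Type*} [Fintype ι] [DecidableEq ι] (c : Fin d → ℂ) (hc : ∀ j, c j ≠ 0)
    (M : Matrix ι ι (LMvF d)) : scaleZF c M.det = (M.map (scaleZF c)).det := by
  rw [scaleZF_eq_twist c hc, AlgHom.map_det]
  rfl

end Substitution

section RootsOfUnity

lemma muC_add (q : ℕ) (a b : ℤ) : muC q (a + b) = muC q a * muC q b := by
  rw [muC, muC, muC, ← Complex.exp_add]
  push_cast
  ring_nf

lemma muC_mul_self (q : ℕ) (k : ℤ) : muC q (q * k) = 1 := by
  rcases eq_or_ne q 0 with rfl | hq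
  · simp [muC]
  · rw [muC, ← Complex.exp_int_mul_two_pi_mul_I k]
    congr 1
    push_cast
    field_simp

/-- For `q = 0` this holds because `a % 0 = a`. -/
lemma muC_emod (q : ℕ) (a : ℤ) : muC q (a % q) = muC q a := by
  conv_rhs => rw [← Int.emod_add_mul_ediv a q]
  rw [muC_add, muC_mul_self, mul_one]

variable {d : ℕ}

lemma muV_ne_zero (q : Fin d → ℕ) (n : Fin d → ℤ) (j : Fin d) : muV q n j ≠ 0 :=
  Complex.exp_ne_zero _

lemma muV_add (q : Fin d → ℕ) (m n : Fin d → ℤ) : muV q (m + n) = muV q m * muV q n :=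
  funext fun j => muC_add (q j) (m j) (n j)

lemma muV_emod (q : Fin d → ℕ) (n : Fin d → ℤ) : muV q (fun j => n j % q j) = muV q n :=
  funext fun j => muC_emod (q j) (n j)

end RootsOfUnity

section FundamentalCell

variable {d : ℕ}

lemma mem_Wcell_iff {q : Fin d → ℕ} {n : Fin d → ℤ} :
    n ∈ Wcell q ↔ ∀ j, 0 ≤ n j ∧ n j < q j := by
  simp only [Wcell, Fintype.mem_piFinset, Finset.mem_image, Finset.mem_range]
  refine forall_congr' fun j => ⟨?_, fun h => ⟨(n j).toNat, by omega, by omega⟩⟩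
  rintro ⟨k, hk, hkn⟩
  omega

lemma emod_mem_Wcell {q : Fin d → ℕ} {n : Fin d → ℤ} (hn : n ∈ Wcell q) (v : Fin d → ℤ) :
    (fun j => v j % q j) ∈ Wcell q := by
  refine mem_Wcell_iff.2 fun j => ?_
  have hq : (0 : ℤ) < q j := by have := mem_Wcell_iff.1 hn j; omega
  exact ⟨Int.emod_nonneg _ hq.ne', Int.emod_lt_of_pos _ hq⟩

def cellShiftFun (q : Fin d → ℕ) (m : Fin d → ℤ) (n : {n // n ∈ Wcell q}) :
    {n // n ∈ Wcell q} :=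
  ⟨fun j => (m j + n.1 j) % q j, emod_mem_Wcell n.2 _⟩

lemma cellShiftFun_injective (q : Fin d → ℕ) (m : Fin d → ℤ) :
    Function.Injective (cellShiftFun q m) := by
  rintro ⟨n, hn⟩ ⟨n', hn'⟩ h
  refine Subtype.ext (funext fun j => ?_)
  dsimp only
  have hmod : n j ≡ n' j [ZMOD q j] :=
    Int.ModEq.add_left_cancel' (m j) (congrFun (congrArg Subtype.val h) j)
  obtain ⟨h0, hlt⟩ := mem_Wcell_iff.1 hn j
  obtain ⟨h0', hlt'⟩ := mem_Wcell_iff.1 hn' j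
  rw [← Int.emod_eq_of_lt h0 hlt, ← Int.emod_eq_of_lt h0' hlt']
  exact hmod

def cellShift (q : Fin d → ℕ) (m : Fin d → ℤ) : {n // n ∈ Wcell q} ≃ {n // n ∈ Wcell q} :=
  Equiv.ofBijective _ (Finite.injective_iff_bijective.1 (cellShiftFun_injective q m))

lemma cellShift_apply_modEq (q : Fin d → ℕ) (m : Fin d → ℤ) (n : {n // n ∈ Wcell q})
    (j : Fin d) : (cellShift q m n).1 j ≡ m j + n.1 j [ZMOD q j] :=
  Int.mod_modEq _ _

lemma muV_cellShift (q : Fin d → ℕ) (m : Fin d → ℤ) (n : {n // n ∈ Wcell q}) :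
    muV q (cellShift q m n).1 = muV q m * muV q n.1 := by
  rw [← muV_add]
  exact muV_emod q (m + n.1)

end FundamentalCell

section FloquetMatrix

variable {d : ℕ}

def floquetMatrix (q : Fin d → ℕ) (p : LMv d) (V : (Fin d → ℤ) → ℂ) :
    Matrix {n // n ∈ Wcell q} {n // n ∈ Wcell q} (LMvF d) :=
  Dmat q p + Bmat q V - Matrix.diagonal fun _ => lamF d

lemma detLaur_eq_det_floquetMatrix (q : Fin d → ℕ) (p : LMv d) (V : (Fin d → ℤ) → ℂ) :
    detLaur q p V = (floquetMatrix q p V).det :=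
  rfl

lemma Vhat_add_intCast (q : Fin d → ℕ) (V : (Fin d → ℤ) → ℂ) (l : Fin d → ℝ) (k : Fin d → ℤ) :
    Vhat q V (l + fun j => (k j : ℝ)) = Vhat q V l := by
  unfold Vhat
  congr 1
  refine Finset.sum_congr rfl fun n _ => ?_
  have h_int : (∑ j, (n j : ℝ) * (l + fun j => (k j : ℝ)) j)
      = (∑ j, (n j : ℝ) * l j) + ((∑ j, n j * k j : ℤ) : ℝ) := by
    push_cast
    simp only [Pi.add_apply, mul_add, Finset.sum_add_distrib]
  rw [h_int, Complex.ofReal_add, mul_add, Complex.exp_add, Complex.ofReal_intCast,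
    show -(2 * Real.pi * Complex.I) * ((∑ j, n j * k j : ℤ) : ℂ)
      = ((-(∑ j, n j * k j) : ℤ) : ℂ) * (2 * Real.pi * Complex.I) by push_cast; ring,
    Complex.exp_int_mul_two_pi_mul_I, mul_one]

lemma Vhat_div_congr (q : Fin d → ℕ) (V : (Fin d → ℤ) → ℂ) {x y : Fin d → ℤ}
    (h : ∀ j, x j ≡ y j [ZMOD q j]) :
    Vhat q V (fun j => (x j : ℝ) / q j) = Vhat q V (fun j => (y j : ℝ) / q j) := by
  have h_shift : (fun j => (y j : ℝ) / q j)
      = (fun j => (x j : ℝ) / q j) + fun j => (((y j - x j) / q j : ℤ) : ℝ) := by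
    funext j
    rcases eq_or_ne (q j) 0 with hq | hq
    · simp [hq]
    · rw [Pi.add_apply, Int.cast_div (h j).dvd (by exact_mod_cast hq)]
      push_cast
      ring
  rw [h_shift, Vhat_add_intCast]

lemma Bmat_submatrix_cellShift (q : Fin d → ℕ) (V : (Fin d → ℤ) → ℂ) (m : Fin d → ℤ) :
    (Bmat q V).submatrix (cellShift q m) (cellShift q m) = Bmat q V := by
  ext1 n n'
  simp only [Matrix.submatrix_apply, Bmat]
  rw [Vhat_div_congr q V fun j => ?_]
  have h := (cellShift_apply_modEq q m n j).sub (cellShift_apply_modEq q m n' j)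
  rwa [add_sub_add_left_eq_sub] at h

lemma map_scaleZF_floquetMatrix (q : Fin d → ℕ) (p : LMv d) (V : (Fin d → ℤ) → ℂ)
    (c : Fin d → ℂ) (hc : ∀ j, c j ≠ 0) :
    (floquetMatrix q p V).map (scaleZF c)
      = (Matrix.diagonal fun n : {x // x ∈ Wcell q} => embedZ (scaleZ c (scaleZ (muV q n.1) p)))
        + Bmat q V - Matrix.diagonal fun _ => lamF d := by
  have h_add (x y : LMvF d) : scaleZF c (x + y) = scaleZF c x + scaleZF c y := by
    rw [scaleZF_eq_twist c hc, map_add]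
  have h_sub (x y : LMvF d) : scaleZF c (x - y) = scaleZF c x - scaleZF c y := by
    rw [scaleZF_eq_twist c hc, map_sub]
  have h_zero : scaleZF c 0 = 0 := by rw [scaleZF_eq_twist c hc, map_zero]
  have h_lam : scaleZF c (lamF d) = lamF d := scaleZF_single_zero_left c hc 1 1
  have h_B : (Bmat q V).map (scaleZF c) = Bmat q V :=
    Matrix.ext fun _ _ => scaleZF_single_zero_left c hc 0 _
  rw [floquetMatrix, Matrix.map_sub _ h_sub, Matrix.map_add _ h_add, Dmat,
    Matrix.diagonal_map h_zero, Matrix.diagonal_map h_zero, h_lam, h_B]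
  simp only [scaleZF_embedZ c hc]

lemma floquetMatrix_submatrix_cellShift (q : Fin d → ℕ) (p : LMv d) (V : (Fin d → ℤ) → ℂ)
    (m : Fin d → ℤ) :
    (floquetMatrix q p V).submatrix (cellShift q m) (cellShift q m)
      = (Matrix.diagonal fun n : {x // x ∈ Wcell q} =>
          embedZ (scaleZ (muV q m) (scaleZ (muV q n.1) p)))
        + Bmat q V - Matrix.diagonal fun _ => lamF d := by
  simp only [floquetMatrix, Matrix.submatrix_sub, Matrix.submatrix_add, Pi.add_apply,
    Pi.sub_apply]
  rw [Bmat_submatrix_cellShift, Dmat, Matrix.submatrix_diagonal_equiv,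
    Matrix.submatrix_diagonal_equiv]
  refine congrArg (· + _ - _) (congrArg Matrix.diagonal (funext fun n => ?_))
  rw [Function.comp_apply, muV_cellShift, scaleZ_scaleZ _ (muV_ne_zero q m) _ (muV_ne_zero q n.1)]

end FloquetMatrix

theorem stmt12_general {d : ℕ} (q : Fin d → ℕ)
    (a : (Fin d → ℤ) →₀ ℂ) (V : (Fin d → ℤ) → ℂ) :
    ∀ m ∈ Wcell q,
      scaleZF (muV q m) (detLaur q (symbA a) V) = detLaur q (symbA a) V ∧
      Matrix.det
          ((Matrix.diagonal fun n : {x // x ∈ Wcell q} =>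
              embedZ (scaleZ (muV q m) (scaleZ (muV q n.1) (symbA a))))
            + Bmat q V - Matrix.diagonal fun _ => lamF d)
        = detLaur q (symbA a) V := by
  intro m _
  have h_shift : Matrix.det ((Matrix.diagonal fun n : {x // x ∈ Wcell q} =>
        embedZ (scaleZ (muV q m) (scaleZ (muV q n.1) (symbA a))))
      + Bmat q V - Matrix.diagonal fun _ => lamF d) = detLaur q (symbA a) V := by
    rw [← floquetMatrix_submatrix_cellShift, Matrix.det_submatrix_equiv_self,
      detLaur_eq_det_floquetMatrix]
  refine ⟨?_, h_shift⟩
  rw [detLaur_eq_det_floquetMatrix, scaleZF_det _ (muV_ne_zero q m),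
    map_scaleZF_floquetMatrix q _ V _ (muV_ne_zero q m), h_shift, detLaur_eq_det_floquetMatrix]

theorem stmt12 {d : ℕ} (hd : 1 ≤ d) (q : Fin d → ℕ) (hq : ∀ j, 1 ≤ q j)
    (a : (Fin d → ℤ) →₀ ℂ) (V : (Fin d → ℤ) → ℂ) (hV : IsPeriodic q V) :
    ∀ m ∈ Wcell q,
      scaleZF (muV q m) (detLaur q (symbA a) V) = detLaur q (symbA a) V ∧
      Matrix.det
          ((Matrix.diagonal fun n : {x // x ∈ Wcell q} =>
              embedZ (scaleZ (muV q m) (scaleZ (muV q n.1) (symbA a))))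
            + Bmat q V - Matrix.diagonal fun _ => lamF d)
        = detLaur q (symbA a) V :=
  stmt12_general q a V
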